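/- In type A_n, with c = s_{α_n} ⋯ s_{α_1}, for every r = 1, …, n the power c^r is the minimal-length coset representative w_{α_r} of the longest element w₀ with respect to the maximal parabolic subgroup omitting the reflection s_{α_r}; equivalently c^r has the same inversion set as w_{α_r}: R⁺(c^r) = R⁺(w_{α_r}). -/

import Mathlib

open scoped Classical
open Finset

noncomputable section

/-- The `i`-th standard basis vector of `ℝ^{n+1}`. -/
def e (n : ℕ) (i : Fin (n + 1)) : Fin (n + 1) → ℝ := fun k => if k = i then 1 else 0

/-- The simple root `α_{j+1} = e_j - e_{j+1}` of the root system of type `A_n`. -/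
def aroot (n : ℕ) (j : Fin n) : Fin (n + 1) → ℝ := e n j.castSucc - e n j.succ

/-- The simple reflection `s_{α_{j+1}}`, the transposition `(j, j+1)`. -/
def sA (n : ℕ) (j : Fin n) : Equiv.Perm (Fin (n + 1)) := Equiv.swap j.castSucc j.succ

/-- The action of the Weyl group (the symmetric group) on weights, by permuting
coordinates. -/
def permAct (n : ℕ) (σ : Equiv.Perm (Fin (n + 1))) (v : Fin (n + 1) → ℝ) :
    Fin (n + 1) → ℝ := fun i => v (σ⁻¹ i)

/-- The Coxeter element `c = s_{α_n} s_{α_{n-1}} ⋯ s_{α_1}`. -/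
def cox (n : ℕ) : Equiv.Perm (Fin (n + 1)) :=
  (List.ofFn fun j : Fin n => sA n j).reverse.prod

/-- The positive roots of type `A_n`: the vectors `e_i - e_j` with `i < j`. -/
def posA (n : ℕ) : Set (Fin (n + 1) → ℝ) :=
  {v | ∃ i j : Fin (n + 1), i < j ∧ v = e n i - e n j}

/-- The simple root `α_{r+1}` occurs in the support of `v`, i.e. `v ≥ α_{r+1}`. -/
def supportsA (n : ℕ) (v : Fin (n + 1) → ℝ) (r : Fin n) : Prop :=
  ∃ c : Fin n → ℕ, v = ∑ j : Fin n, (c j : ℝ) • aroot n j ∧ 1 ≤ c r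

end

/-- Length of a permutation, as its number of inversions. -/
def invCount (n : ℕ) (σ : Equiv.Perm (Fin (n + 1))) : ℕ :=
  ((univ : Finset (Fin (n + 1) × Fin (n + 1))).filter fun p =>
    p.1 < p.2 ∧ σ p.2 < σ p.1).card

/-- The maximal parabolic subgroup of the Weyl group generated by all simple reflections
other than `s_{α_{r+1}}`. -/
def WQ (n : ℕ) (r : Fin n) : Subgroup (Equiv.Perm (Fin (n + 1))) :=
  Subgroup.closure {σ | ∃ j : Fin n, j ≠ r ∧ σ = sA n j}

/-!
The Coxeter element `c` acts on `Fin (n + 1)` as the rotation `i ↦ i - 1`, so `c^(r+1)` maps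
`{0, …, r}` increasingly onto the final segment and the rest increasingly onto the initial one.
Hence `w₀ c^(r+1)` stabilizes the segment `{0, …, r}`, and the inversions of `c^(r+1)` are
exactly the pairs `i ≤ r < j`. The parabolic subgroup `W_Q` is precisely the stabilizer of that
segment: its generators preserve it, and conversely a segment-preserving permutation is sorted by
bubble sort, whose descents are never at `r`. Finally, for `u` in the stabilizer, `w₀ u` inverts
every pair `i ≤ r < j`, so `c^(r+1)` has the fewest inversions in the coset `w₀ W_Q`.
-/

open Equiv

namespace TypeA

variable {n : ℕ}

theorem sA_val_apply (j : Fin n) (x : Fin (n + 1)) :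
    (sA n j x : ℕ) =
      if (x : ℕ) = j then (j : ℕ) + 1 else if (x : ℕ) = (j : ℕ) + 1 then (j : ℕ) else x := by
  rw [sA, swap_apply_def]
  split_ifs <;> simp_all [Fin.ext_iff]

theorem sA_lt_sA_of_lt (j : Fin n) {x y : Fin (n + 1)} (hxy : x < y)
    (hne : (x, y) ≠ (j.castSucc, j.succ)) : sA n j x < sA n j y := by
  simp only [ne_eq, Prod.mk.injEq, Fin.ext_iff, Fin.val_castSucc, Fin.val_succ] at hne
  rw [Fin.lt_def] at hxy ⊢
  rw [sA_val_apply, sA_val_apply]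
  split_ifs <;> omega

theorem prod_reverse_take_sA_val_apply {m : ℕ} (hm : m ≤ n) (x : Fin (n + 1)) :
    ((((List.ofFn fun j : Fin n => sA n j).take m).reverse.prod x : Fin (n + 1)) : ℕ) =
      if (x : ℕ) = 0 then m else if (x : ℕ) ≤ m then (x : ℕ) - 1 else x := by
  induction m with
  | zero => split_ifs <;> simp_all
  | succ m ih =>
    rw [List.take_add_one, List.getElem?_ofFn]
    simp only [dif_pos (show m < n by omega), Option.toList_some, List.reverse_append,
      List.reverse_singleton, List.prod_cons, List.singleton_append, Perm.mul_apply]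
    rw [sA_val_apply, ih (by omega)]
    dsimp only
    split_ifs <;> omega

theorem cox_apply (x : Fin (n + 1)) : cox n x = x - 1 := by
  have h := prod_reverse_take_sA_val_apply (le_refl n) x
  rw [List.take_of_length_le (by simp)] at h
  rw [Fin.ext_iff, cox, h, Fin.coe_sub_one]
  have := x.isLt
  simp only [Fin.ext_iff, Fin.val_zero]
  split_ifs <;> omega

open Fin.NatCast in
theorem cox_pow_apply (k : ℕ) (x : Fin (n + 1)) : (cox n ^ k) x = x - (k : Fin (n + 1)) := by
  induction k with
  | zero => simp
  | succ k ih => rw [pow_succ', Perm.mul_apply, ih, cox_apply, Nat.cast_succ, sub_sub]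

open Fin.NatCast in
theorem cox_pow_val_apply (r : Fin n) (x : Fin (n + 1)) :
    ((cox n ^ ((r : ℕ) + 1)) x : ℕ) =
      if (x : ℕ) ≤ r then (x : ℕ) + n - r else (x : ℕ) - r - 1 := by
  have hr := r.isLt
  have hx := x.isLt
  have hk : (((r : ℕ) + 1 : ℕ) : Fin (n + 1)).val = r + 1 := by
    rw [Fin.val_natCast, Nat.mod_eq_of_lt (by omega)]
  rw [cox_pow_apply, Fin.val_sub, hk, show n + 1 - ((r : ℕ) + 1) + x = x + n - r by omega]
  split_ifs
  · exact Nat.mod_eq_of_lt (by omega)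
  · rw [Nat.mod_eq_sub_mod (by omega), Nat.mod_eq_of_lt (by omega)]
    omega

def inversions (σ : Perm (Fin (n + 1))) : Finset (Fin (n + 1) × Fin (n + 1)) :=
  univ.filter fun p => p.1 < p.2 ∧ σ p.2 < σ p.1

theorem invCount_eq_card_inversions (σ : Perm (Fin (n + 1))) :
    invCount n σ = (inversions σ).card := rfl

theorem mem_inversions {σ : Perm (Fin (n + 1))} {p : Fin (n + 1) × Fin (n + 1)} :
    p ∈ inversions σ ↔ p.1 < p.2 ∧ σ p.2 < σ p.1 := by
  simp [inversions]

theorem map_inversions_mul_sA_subset {σ : Perm (Fin (n + 1))} {j : Fin n}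
    (hj : σ j.succ < σ j.castSucc) :
    (inversions (σ * sA n j)).map ((sA n j).prodCongr (sA n j)).toEmbedding
      ⊆ (inversions σ).erase (j.castSucc, j.succ) := by
  intro q hq
  obtain ⟨⟨x, y⟩, hxy, rfl⟩ := mem_map.1 hq
  rw [mem_inversions] at hxy
  obtain ⟨hlt, hinv⟩ := hxy
  have hne : (x, y) ≠ (j.castSucc, j.succ) := by
    rintro ⟨⟩
    simp only [sA, Perm.mul_apply, swap_apply_left, swap_apply_right] at hinv
    exact hinv.asymm hj
  refine mem_erase.2 ⟨?_, mem_inversions.2 ⟨sA_lt_sA_of_lt j hlt hne, hinv⟩⟩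
  intro hs
  simp only [sA, coe_toEmbedding, prodCongr_apply, Prod.map, Prod.mk.injEq, swap_apply_eq_iff,
    swap_apply_left, swap_apply_right] at hs
  rw [hs.1, hs.2] at hlt
  exact hlt.asymm j.castSucc_lt_succ

theorem invCount_mul_sA_lt {σ : Perm (Fin (n + 1))} {j : Fin n}
    (hj : σ j.succ < σ j.castSucc) : invCount n (σ * sA n j) < invCount n σ := by
  rw [invCount_eq_card_inversions, invCount_eq_card_inversions, ← card_map]
  refine (card_le_card (map_inversions_mul_sA_subset hj)).trans_lt (card_erase_lt_of_mem ?_)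
  exact mem_inversions.2 ⟨j.castSucc_lt_succ, hj⟩

theorem exists_succ_lt_castSucc_of_ne_one {σ : Perm (Fin (n + 1))} (hσ : σ ≠ 1) :
    ∃ j : Fin n, σ j.succ < σ j.castSucc := by
  by_contra! h
  have hmono : StrictMono σ := Fin.strictMono_iff_lt_succ.2 fun j =>
    (h j).lt_of_ne (σ.injective.ne j.castSucc_lt_succ.ne)
  exact hσ (Equiv.ext fun x => congrFun (hmono.range_inj strictMono_id |>.1 (by simp)) x)

def segmentStabilizer (r : Fin n) : Subgroup (Perm (Fin (n + 1))) where
  carrier := {σ | ∀ x : Fin (n + 1), (σ x : ℕ) ≤ r ↔ (x : ℕ) ≤ r}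
  one_mem' _ := Iff.rfl
  mul_mem' ha hb x := (ha _).trans (hb x)
  inv_mem' {σ} hσ x := by simpa using (hσ (σ⁻¹ x)).symm

theorem sA_mem_segmentStabilizer {r j : Fin n} (hj : j ≠ r) : sA n j ∈ segmentStabilizer r := by
  intro x
  have hj' : (j : ℕ) ≠ r := Fin.val_ne_of_ne hj
  rw [sA_val_apply]
  split_ifs <;> omega

theorem WQ_le_segmentStabilizer (r : Fin n) : WQ n r ≤ segmentStabilizer r := by
  rw [WQ, Subgroup.closure_le]
  rintro _ ⟨j, hj, rfl⟩
  exact sA_mem_segmentStabilizer hj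

theorem segmentStabilizer_le_WQ (r : Fin n) : segmentStabilizer r ≤ WQ n r := by
  intro σ hσ
  induction h : invCount n σ using Nat.strong_induction_on generalizing σ with
  | _ k ih =>
  by_cases hσ1 : σ = 1
  · exact hσ1 ▸ one_mem _
  obtain ⟨j, hj⟩ := exists_succ_lt_castSucc_of_ne_one hσ1
  have hjr : j ≠ r := by
    rintro rfl
    have h₁ := (hσ j.castSucc).2 le_rfl
    have h₂ := (hσ j.succ).not.2 (by simp)
    rw [Fin.lt_def] at hj
    omega
  have hσs : σ * sA n j ∈ WQ n r :=
    ih _ (h ▸ invCount_mul_sA_lt hj) (mul_mem hσ (sA_mem_segmentStabilizer hjr)) rfl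
  simpa [sA, mul_assoc] using mul_mem hσs (Subgroup.subset_closure ⟨j, hjr, rfl⟩)

theorem WQ_eq_segmentStabilizer (r : Fin n) : WQ n r = segmentStabilizer r :=
  le_antisymm (WQ_le_segmentStabilizer r) (segmentStabilizer_le_WQ r)

theorem revPerm_mul_cox_pow_mem_segmentStabilizer (r : Fin n) :
    Fin.revPerm * cox n ^ ((r : ℕ) + 1) ∈ segmentStabilizer r := by
  intro x
  have := x.isLt
  rw [Perm.mul_apply, Fin.revPerm_apply, Fin.val_rev, cox_pow_val_apply]
  split_ifs <;> omega

theorem inversions_cox_pow (r : Fin n) :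
    inversions (cox n ^ ((r : ℕ) + 1)) = univ.filter fun p => (p.1 : ℕ) ≤ r ∧ r < (p.2 : ℕ) := by
  ext ⟨x, y⟩
  have := x.isLt
  have := y.isLt
  simp only [mem_inversions, mem_filter, mem_univ, true_and, Fin.lt_def, cox_pow_val_apply]
  split_ifs <;> omega

theorem inversions_cox_pow_subset {r : Fin n} {u : Perm (Fin (n + 1))}
    (hu : u ∈ segmentStabilizer r) :
    inversions (cox n ^ ((r : ℕ) + 1)) ⊆ inversions (Fin.revPerm * u) := by
  rw [inversions_cox_pow]
  rintro ⟨x, y⟩ hxy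
  simp only [mem_filter, mem_univ, true_and] at hxy
  have hx := (hu x).2 hxy.1
  have hy := (hu y).not.2 hxy.2.not_ge
  have := (u x).isLt
  have := (u y).isLt
  simp only [mem_inversions, Perm.mul_apply, Fin.revPerm_apply, Fin.lt_def, Fin.val_rev]
  omega

end TypeA

/-- `c^r` is the minimal-length representative of the coset `w₀ W_{Q_{α_r}}`,
where `w₀` is the longest element (the order-reversing permutation). -/
theorem stmt_8 (n : ℕ) (r : Fin n) :
    (∃ u ∈ WQ n r, (cox n) ^ ((r : ℕ) + 1) = Fin.revPerm * u) ∧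
    ∀ u ∈ WQ n r,
      invCount n ((cox n) ^ ((r : ℕ) + 1)) ≤ invCount n (Fin.revPerm * u) := by
  rw [TypeA.WQ_eq_segmentStabilizer]
  refine ⟨⟨_, TypeA.revPerm_mul_cox_pow_mem_segmentStabilizer r, ?_⟩, fun u hu => ?_⟩
  · rw [← mul_assoc, show (Fin.revPerm : Perm (Fin (n + 1))) * Fin.revPerm = 1 by ext; simp,
      one_mul]
  · exact card_le_card (TypeA.inversions_cox_pow_subset hu)
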